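/- Let W denote an irreducible T-module with endpoint r, set d = D − 2r, and let u ∈ E_r W, u* ∈ E*_r W, u^ε ∈ E^ε_r W be nonzero. Then ⟨u^ε, u*⟩ ≠ 0 and ||u||² = (1+i)^d·⟨u, u*⟩·⟨u^ε, u⟩·⟨u^ε, u*⟩^{−1}. -/

import Mathlib

noncomputable section

open Matrix Finset

/-- Vertex set of the hypercube `Q_D`: binary strings of length `D`. -/
abbrev Vtx (D : ℕ) := Fin D → Bool

/-- Hamming weight of a vertex, i.e. its distance to the fixed vertex `x = (0,...,0)`. -/
def wt {D : ℕ} (y : Vtx D) : ℕ := (Finset.univ.filter fun k => y k = true).card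

/-- The adjacency matrix of the hypercube `Q_D`: `A_{yz} = 1` iff `y,z` differ in exactly
one coordinate. -/
def adjMat (D : ℕ) : Matrix (Vtx D) (Vtx D) ℂ :=
  fun y z => if (Finset.univ.filter fun k => y k ≠ z k).card = 1 then 1 else 0

/-- The dual adjacency matrix of `Q_D` with respect to `x = (0,...,0)`: the diagonal
matrix with `(y,y)`-entry `D - 2·wt(y)`. -/
def dualAdjMat (D : ℕ) : Matrix (Vtx D) (Vtx D) ℂ :=
  Matrix.diagonal fun y => (D : ℂ) - 2 * (wt y : ℂ)

/-- The imaginary adjacency matrix `Aᵉ = -i(AA* - A*A)/2`. -/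
def imagAdjMat (D : ℕ) : Matrix (Vtx D) (Vtx D) ℂ :=
  (-Complex.I / 2) • (adjMat D * dualAdjMat D - dualAdjMat D * adjMat D)

/-- The 2×2 matrix `P₁` with entries `(P₁)₀₀ = 1`, `(P₁)₀₁ = 1`, `(P₁)₁₀ = -i`,
`(P₁)₁₁ = i`. -/
def P1 : Bool → Bool → ℂ
  | false, false => 1
  | false, true  => 1
  | true,  false => -Complex.I
  | true,  true  => Complex.I

/-- The D-fold Kronecker power `P = P₁^{⊗D}`, i.e. `P_{yz} = ∏_k (P₁)_{y_k z_k}`. -/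
def Pmat (D : ℕ) : Matrix (Vtx D) (Vtx D) ℂ :=
  fun y z => ∏ k : Fin D, P1 (y k) (z k)

/-- The eigenvalues `θ_j = D - 2j`. -/
def theta (D j : ℕ) : ℂ := (D : ℂ) - 2 * (j : ℂ)

/-- The `i`-th primitive idempotent `E_i = ∏_{0 ≤ j ≤ D, j ≠ i} (A - θ_j I)/(θ_i - θ_j)`. -/
def Emat (D i : ℕ) : Matrix (Vtx D) (Vtx D) ℂ :=
  Polynomial.aeval (adjMat D)
    (∏ j ∈ (Finset.range (D + 1)).erase i,
      Polynomial.C ((theta D i - theta D j)⁻¹) * (Polynomial.X - Polynomial.C (theta D j)))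

/-- The `i`-th dual idempotent `E*_i`: diagonal with `(y,y)`-entry `1` if `wt(y) = i`. -/
def EstarMat (D i : ℕ) : Matrix (Vtx D) (Vtx D) ℂ :=
  Matrix.diagonal fun y => if wt y = i then 1 else 0

/-- The `i`-th imaginary idempotent `Eᵉ_i = P⁻¹ E_i P`. -/
def EepsMat (D i : ℕ) : Matrix (Vtx D) (Vtx D) ℂ :=
  (Pmat D)⁻¹ * Emat D i * Pmat D

/-- `W` is a `T`-module: a subspace of `ℂ^X` invariant under `A` and `A*`. -/
def IsTMod (D : ℕ) (W : Submodule ℂ (Vtx D → ℂ)) : Prop :=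
  (∀ w ∈ W, (adjMat D).mulVec w ∈ W) ∧ (∀ w ∈ W, (dualAdjMat D).mulVec w ∈ W)

/-- `W` is an irreducible `T`-module. -/
def IsIrredTMod (D : ℕ) (W : Submodule ℂ (Vtx D → ℂ)) : Prop :=
  IsTMod D W ∧ W ≠ ⊥ ∧
    ∀ U : Submodule ℂ (Vtx D → ℂ), IsTMod D U → U ≤ W → U = ⊥ ∨ U = W

/-- The Hermitian inner product `⟨u,v⟩ = uᵗ · conj v` (linear in the first argument). -/
def inp {D : ℕ} (u v : Vtx D → ℂ) : ℂ := ∑ y, u y * (starRingEnd ℂ) (v y)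


/-!
Let `v = u*`, and split the adjacency matrix as `A = R + L`, where `R` raises and `L` lowers the
weight; then `LR - RL = A*`. Minimality of the endpoint `r` gives `L v = 0`, so the `sl₂`
relations yield `L v_{k+1} = (k+1)(d-k) v_k` for the ladder `v_k = R^k v`. Hence
`‖v_k‖² = k! (d)_k ‖v‖²` with `d = D - 2r`, the ladder stops after `v_d`, and by irreducibility
`v_0, …, v_d` is an orthogonal basis of `W`.

Since `P` conjugates `A` to `A*` and `A*` to `Aᵉ = -i(R - L)`, while `P³` is scalar, all three
matrices are annihilated by `∏ⱼ (X - θⱼ)`, and `E_r`, `Eᵉ_r` are the Lagrange polynomials of `A`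
and `Aᵉ` at `θ_r = d`. So `u` and `uᵉ` are `d`-eigenvectors of the self-adjoint matrices
`R + L` and `-iR + iL`, which forces `⟨u, v_k⟩ = (d)_k ⟨u, v⟩` and
`⟨uᵉ, v_k⟩ = (-i)^k (d)_k ⟨uᵉ, v⟩`. Expanding in the orthogonal basis gives
`‖u‖² = 2^d |⟨u, v⟩|² / ‖v‖²`, `⟨uᵉ, u⟩ = (1 - i)^d ⟨uᵉ, v⟩ conj ⟨u, v⟩ / ‖v‖²` and
`‖uᵉ‖² = 2^d |⟨uᵉ, v⟩|² / ‖v‖²`; the last one shows `⟨uᵉ, u*⟩ ≠ 0`, and `(1 + i)(1 - i) = 2`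
gives the formula.
-/

namespace Matrix

section KroneckerPower

variable {α : Type*} {n : ℕ}

def kronPow (n : ℕ) (M : Matrix α α ℂ) : Matrix (Fin n → α) (Fin n → α) ℂ :=
  fun y z => ∏ k, M (y k) (z k)

lemma kronPow_mul [Fintype α] (M N : Matrix α α ℂ) :
    kronPow n M * kronPow n N = kronPow n (M * N) := by
  ext y z
  simp only [mul_apply, kronPow, ← prod_mul_distrib]
  exact sum_prod_piFinset univ fun k b => M (y k) b * N b (z k)

lemma kronPow_smul_one [DecidableEq α] (c : ℂ) :
    kronPow n (c • (1 : Matrix α α ℂ)) = c ^ n • 1 := by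
  ext y z
  by_cases h : y = z
  · subst h; simp [kronPow]
  · obtain ⟨k, hk⟩ := Function.ne_iff.mp h
    simp only [kronPow, Matrix.smul_apply, one_apply_ne h, smul_zero]
    exact prod_eq_zero (mem_univ k) (by simp [hk])

end KroneckerPower

variable {ι K : Type*} [Fintype ι] [DecidableEq ι] [CommRing K]

def invtSubalgebra (W : Submodule K (ι → K)) : Subalgebra K (Matrix ι ι K) where
  carrier := {M | ∀ w ∈ W, M *ᵥ w ∈ W}
  mul_mem' hM hN w hw := by rw [← mulVec_mulVec]; exact hM _ (hN w hw)
  add_mem' hM hN w hw := by rw [add_mulVec]; exact W.add_mem (hM w hw) (hN w hw)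
  algebraMap_mem' c w hw := by
    rw [Algebra.algebraMap_eq_smul_one, smul_mulVec, one_mulVec]
    exact W.smul_mem c hw

lemma aeval_mem_invtSubalgebra {W : Submodule K (ι → K)} {M : Matrix ι ι K}
    (hM : M ∈ invtSubalgebra W) (q : Polynomial K) : Polynomial.aeval M q ∈ invtSubalgebra W :=
  Algebra.adjoin_le (Set.singleton_subset_iff.mpr hM) (Polynomial.aeval_mem_adjoin_singleton K M)

lemma mem_invtSubalgebra_span {M : Matrix ι ι K} {S : Set (ι → K)}
    (h : ∀ x ∈ S, M *ᵥ x ∈ Submodule.span K S) : M ∈ invtSubalgebra (Submodule.span K S) :=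
  fun _ hw => (Submodule.span_le (p := (Submodule.span K S).comap (toLin' M))).mpr h hw

lemma lower_mulVec_pow_succ_mulVec {L R H : Matrix ι ι K} (hLR : L * R - R * L = H) {θ : K}
    {v : ι → K} (hH : ∀ k : ℕ, H *ᵥ ((R ^ k) *ᵥ v) = (θ - 2 * k) • ((R ^ k) *ᵥ v))
    (hv : L *ᵥ v = 0) (k : ℕ) :
    L *ᵥ ((R ^ (k + 1)) *ᵥ v) = ((k + 1) * (θ - k)) • ((R ^ k) *ᵥ v) := by
  have hcomm : ∀ x, L *ᵥ (R *ᵥ x) = R *ᵥ (L *ᵥ x) + H *ᵥ x := fun x => by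
    rw [mulVec_mulVec, mulVec_mulVec, ← add_mulVec, ← hLR, add_sub_cancel]
  induction k with
  | zero => simpa [hv, by simpa using hH 0] using hcomm v
  | succ k ih =>
    rw [pow_succ', ← mulVec_mulVec, hcomm, ih, mulVec_smul, mulVec_mulVec, ← pow_succ', hH,
      ← add_smul]
    congr 1
    push_cast
    ring

end Matrix

namespace Polynomial

lemma aeval_mul_eq_mul_aeval {R A : Type*} [CommSemiring R] [Semiring A] [Algebra R A]
    {a b p : A} (h : a * p = p * b) (q : R[X]) : aeval a q * p = p * aeval b q := by
  induction q using Polynomial.induction_on' with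
  | add q₁ q₂ h₁ h₂ => rw [map_add, map_add, add_mul, mul_add, h₁, h₂]
  | monomial n c =>
    have hpow : a ^ n * p = p * b ^ n := (SemiconjBy.pow_right h.symm n).symm
    rw [aeval_monomial, aeval_monomial, mul_assoc, hpow, ← mul_assoc, ← mul_assoc,
      Algebra.commutes]

end Polynomial

namespace Lagrange

open Polynomial

variable {F ι : Type*} [Field F] [DecidableEq ι] {s : Finset ι} {v : ι → F} {i : ι}

lemma X_sub_C_mul_basis (hi : i ∈ s) :
    (X - C (v i)) * Lagrange.basis s v i
      = C (∏ j ∈ s.erase i, (v i - v j)⁻¹) * nodal s v := by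
  simp_rw [Lagrange.basis, basisDivisor, prod_mul_distrib, ← map_prod,
    nodal_eq_mul_nodal_erase hi, nodal_eq]
  ring

lemma mul_aeval_basis_of_aeval_nodal_eq_zero {A : Type*} [Ring A] [Algebra F A] (hi : i ∈ s)
    {a : A} (ha : aeval a (nodal s v) = 0) :
    a * aeval a (Lagrange.basis s v i) = v i • aeval a (Lagrange.basis s v i) := by
  have h := congrArg (aeval a) (X_sub_C_mul_basis (v := v) hi)
  rw [map_mul, map_mul, ha, mul_zero, map_sub, aeval_X, aeval_C, sub_mul, sub_eq_zero] at h
  rw [h, Algebra.smul_def]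

end Lagrange

section DescFactorial

variable {K : Type*} [CommRing K]

lemma Nat.cast_descFactorial_succ (d k : ℕ) :
    (d.descFactorial (k + 1) : K) = d.descFactorial k * ((d : K) - k) := by
  rw [← descPochhammer_eval_eq_descFactorial, ← descPochhammer_eval_eq_descFactorial,
    descPochhammer_succ_eval]

-- At `k = 0` the coefficient of the truncated `f (k - 1)` vanishes.
lemma eq_pow_mul_descFactorial_of_recurrence (d : ℕ) (a : K) {f : ℕ → K}
    (hf : ∀ k : ℕ, f (k + 1) = a * d * f k - a ^ 2 * (k * (d - k + 1)) * f (k - 1)) (k : ℕ) :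
    f k = a ^ k * d.descFactorial k * f 0 := by
  suffices ∀ k, f k = a ^ k * d.descFactorial k * f 0 ∧
      f (k + 1) = a ^ (k + 1) * d.descFactorial (k + 1) * f 0 from (this k).1
  intro k
  induction k with
  | zero => simp [hf 0]
  | succ k ih =>
    refine ⟨ih.2, ?_⟩
    rw [hf, Nat.add_sub_cancel, ih.1, ih.2, Nat.cast_descFactorial_succ d (k + 1),
      Nat.cast_descFactorial_succ d k]
    push_cast
    ring

end DescFactorial

namespace Hypercube

open Polynomial
open scoped Nat

variable {D : ℕ}

section Flip

def flip (y : Vtx D) (k : Fin D) : Vtx D := Function.update y k (!y k)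

@[simp] lemma flip_apply_self (y : Vtx D) (k : Fin D) : flip y k k = !y k := by
  simp [flip]

lemma flip_apply_of_ne (y : Vtx D) {k m : Fin D} (h : m ≠ k) : flip y k m = y m := by
  simp [flip, h]

@[simp] lemma flip_flip (y : Vtx D) (k : Fin D) : flip (flip y k) k = y := by
  ext m
  by_cases h : m = k
  · subst h; simp
  · simp [flip_apply_of_ne _ h]

lemma flip_comm (y : Vtx D) (k m : Fin D) : flip (flip y k) m = flip (flip y m) k := by
  ext j
  by_cases hk : j = k <;> by_cases hm : j = m <;> subst_vars <;> simp [flip_apply_of_ne, *]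

lemma eq_flip_comm {y z : Vtx D} {k : Fin D} : z = flip y k ↔ y = flip z k := by
  constructor <;> rintro rfl <;> simp

lemma eq_flip_iff {y z : Vtx D} {k : Fin D} :
    z = flip y k ↔ univ.filter (fun m => y m ≠ z m) = {k} := by
  constructor
  · rintro rfl
    ext m
    by_cases h : m = k
    · subst h; simp
    · simp [flip_apply_of_ne y h, h]
  · intro h
    ext m
    have hm := congrArg (m ∈ ·) h
    simp only [mem_filter, mem_univ, true_and, mem_singleton, eq_iff_iff] at hm
    by_cases hmk : m = k
    · subst hmk; simpa [Bool.eq_not] using (hm.mpr rfl).symm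
    · simpa [flip_apply_of_ne y hmk, hmk, eq_comm] using hm

lemma filter_flip_eq_insert {y : Vtx D} {k : Fin D} {b : Bool} (h : y k = !b) :
    univ.filter (fun m => flip y k m = b) = insert k (univ.filter fun m => y m = b) := by
  ext m
  by_cases hm : m = k
  · subst hm; simp [h]
  · simp [flip_apply_of_ne y hm, hm]

lemma wt_flip_of_false {y : Vtx D} {k : Fin D} (h : y k = false) :
    wt (flip y k) = wt y + 1 := by
  rw [wt, wt, filter_flip_eq_insert (b := true) (by simp [h]), card_insert_of_notMem (by simp [h])]

lemma wt_flip_of_true {y : Vtx D} {k : Fin D} (h : y k = true) :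
    wt (flip y k) + 1 = wt y := by
  simpa using (wt_flip_of_false (y := flip y k) (k := k) (by simp [h])).symm

lemma card_filter_false_add_wt (y : Vtx D) : #(univ.filter fun k => y k = false) + wt y = D := by
  simpa [wt] using card_filter_add_card_filter_not (s := univ) (fun k => y k = false)

lemma wt_le (y : Vtx D) : wt y ≤ D := by
  have := card_filter_false_add_wt y
  omega

lemma cast_card_filter_false (y : Vtx D) :
    (#(univ.filter fun k => y k = false) : ℂ) = D - wt y := by
  rw [eq_sub_iff_add_eq]
  exact_mod_cast card_filter_false_add_wt y

lemma sum_sign (y : Vtx D) : ∑ k, (if y k then -1 else 1 : ℂ) = D - 2 * wt y := by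
  rw [sum_ite, sum_const, sum_const]
  simp only [Bool.not_eq_true, nsmul_eq_mul, cast_card_filter_false, wt]
  ring

end Flip

section Operators

lemma adjMat_apply_eq_sum (y z : Vtx D) : adjMat D y z = ∑ k, if z = flip y k then 1 else 0 := by
  simp_rw [adjMat, eq_flip_iff]
  split_ifs with h
  · obtain ⟨a, ha⟩ := card_eq_one.mp h
    simp [ha]
  · exact (sum_eq_zero fun k _ => if_neg fun hk => h (by rw [hk, card_singleton])).symm

/-- `flipMat D true` is the raising matrix `R`, mapping `E*_j V` into `E*_{j+1} V`, and
`flipMat D false` the lowering matrix `L`. -/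
def flipMat (D : ℕ) (b : Bool) : Matrix (Vtx D) (Vtx D) ℂ :=
  fun y z => ∑ k ∈ univ.filter (fun k => y k = b), if z = flip y k then 1 else 0

lemma flipMat_mul_apply (b : Bool) (M : Matrix (Vtx D) (Vtx D) ℂ) (y z : Vtx D) :
    (flipMat D b * M) y z = ∑ k ∈ univ.filter (fun k => y k = b), M (flip y k) z := by
  simp only [mul_apply, flipMat, sum_mul, ite_mul, one_mul, zero_mul]
  rw [sum_comm]
  simp

lemma flipMat_mulVec_apply (b : Bool) (x : Vtx D → ℂ) (y : Vtx D) :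
    (flipMat D b *ᵥ x) y = ∑ k ∈ univ.filter (fun k => y k = b), x (flip y k) := by
  simp only [mulVec, dotProduct, flipMat, sum_mul, ite_mul, one_mul, zero_mul]
  rw [sum_comm]
  simp

lemma flipMat_true_add_false : flipMat D true + flipMat D false = adjMat D := by
  ext y z
  rw [Matrix.add_apply, adjMat_apply_eq_sum, flipMat, flipMat, sum_filter, sum_filter,
    ← sum_add_distrib]
  refine sum_congr rfl fun k _ => ?_
  cases y k <;> simp

lemma conjTranspose_flipMat (b : Bool) : (flipMat D b)ᴴ = flipMat D (!b) := by
  ext y z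
  simp only [conjTranspose_apply, flipMat, sum_filter, star_sum]
  refine sum_congr rfl fun k _ => ?_
  by_cases h : y = flip z k
  · subst h; simp
  · have h' : ¬ z = flip y k := fun h' => h (eq_flip_comm.mp h')
    simp [h, h']

lemma adjMat_mul_dualAdjMat_sub :
    adjMat D * dualAdjMat D - dualAdjMat D * adjMat D
      = (2 : ℂ) • (flipMat D true - flipMat D false) := by
  ext y z
  simp only [Matrix.sub_apply, Matrix.smul_apply, dualAdjMat, mul_diagonal, diagonal_mul,
    adjMat_apply_eq_sum, flipMat, sum_filter, sum_mul, mul_sum, ← sum_sub_distrib, smul_eq_mul]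
  refine sum_congr rfl fun k _ => ?_
  by_cases h : z = flip y k
  · subst h
    cases hy : y k
    · simp [wt_flip_of_false hy]; ring
    · simp [← wt_flip_of_true hy]; ring
  · simp [h]

lemma imagAdjMat_eq :
    imagAdjMat D = (-Complex.I) • flipMat D true + Complex.I • flipMat D false := by
  rw [imagAdjMat, adjMat_mul_dualAdjMat_sub, smul_smul, smul_sub]
  ring_nf
  module

lemma flipMat_false_mul_true_sub :
    flipMat D false * flipMat D true - flipMat D true * flipMat D false = dualAdjMat D := by
  refine mulVec_injective (funext fun x => funext fun y => ?_)
  have hcross : ∀ b : Bool, ∀ k, y k = !b →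
      ∑ m ∈ univ.filter (fun m => flip y k m = b), x (flip (flip y k) m)
        = x y + ∑ m ∈ univ.filter (fun m => y m = b), x (flip (flip y k) m) := by
    intro b k hk
    rw [filter_flip_eq_insert hk, sum_insert (by simp [hk]), flip_flip]
  simp only [sub_mulVec, ← mulVec_mulVec, Pi.sub_apply, flipMat_mulVec_apply]
  rw [sum_congr rfl fun k hk => hcross true k (by simpa using hk),
    sum_congr rfl fun k hk => hcross false k (by simpa using hk),
    sum_add_distrib, sum_add_distrib, sum_comm (s := univ.filter fun k => y k = true)]
  simp_rw [flip_comm y]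
  rw [dualAdjMat, mulVec_diagonal, sum_const, sum_const, nsmul_eq_mul, nsmul_eq_mul,
    cast_card_filter_false, wt]
  ring

end Operators

section ChangeOfBasis

lemma Pmat_eq_kronPow : Pmat D = kronPow D (of P1) := rfl

lemma P1_cube : of P1 * of P1 * of P1 = (2 - 2 * Complex.I) • (1 : Matrix Bool Bool ℂ) := by
  ext b c
  cases b <;> cases c <;> simp [mul_apply, P1] <;> ring_nf <;> simp [Complex.I_sq] <;> ring

lemma Pmat_cube : Pmat D * Pmat D * Pmat D = (2 - 2 * Complex.I) ^ D • 1 := by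
  rw [Pmat_eq_kronPow, kronPow_mul, kronPow_mul, P1_cube, kronPow_smul_one]

lemma two_sub_two_I_pow_ne_zero : (2 - 2 * Complex.I) ^ D ≠ 0 :=
  pow_ne_zero _ fun h => by simpa using congrArg Complex.re h

lemma isUnit_Pmat : IsUnit (Pmat D) := by
  refine IsUnit.of_mul_eq_one (((2 - 2 * Complex.I) ^ D)⁻¹ • (Pmat D * Pmat D)) ?_
  rw [mul_smul_comm, ← Matrix.mul_assoc, Pmat_cube, smul_smul,
    inv_mul_cancel₀ two_sub_two_I_pow_ne_zero, one_smul]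

lemma prod_flip_eq_mul (f : Fin D → Bool → ℂ) (y : Vtx D) (k : Fin D) {c : ℂ}
    (hc : f k (!y k) = c * f k (y k)) : ∏ m, f m (flip y k m) = c * ∏ m, f m (y m) := by
  rw [← mul_prod_erase _ _ (mem_univ k), ← mul_prod_erase _ (fun m => f m (y m)) (mem_univ k),
    flip_apply_self, hc, mul_assoc,
    prod_congr rfl fun m hm => by rw [flip_apply_of_ne y (ne_of_mem_erase hm)]]

lemma Pmat_flip_right (y z : Vtx D) (k : Fin D) :
    Pmat D y (flip z k) = (if y k then -1 else 1) * Pmat D y z :=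
  prod_flip_eq_mul (fun m c => P1 (y m) c) z k (by cases y k <;> cases z k <;> simp [P1])

lemma Pmat_flip_left (y z : Vtx D) (k : Fin D) :
    Pmat D (flip y k) z
      = (if y k then Complex.I else -Complex.I) * (if z k then -1 else 1) * Pmat D y z :=
  prod_flip_eq_mul (fun m b => P1 b (z m)) y k (by
    cases y k <;> cases z k <;> simp [P1])

lemma mul_adjMat_apply (M : Matrix (Vtx D) (Vtx D) ℂ) (y z : Vtx D) :
    (M * adjMat D) y z = ∑ k, M y (flip z k) := by
  simp_rw [mul_apply, adjMat_apply_eq_sum, eq_flip_comm (z := z), mul_sum, mul_ite, mul_one,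
    mul_zero]
  rw [sum_comm]
  simp

lemma Pmat_mul_adjMat : Pmat D * adjMat D = dualAdjMat D * Pmat D := by
  ext y z
  rw [mul_adjMat_apply, dualAdjMat, diagonal_mul, ← sum_sign]
  simp_rw [Pmat_flip_right, sum_mul]

lemma Pmat_mul_dualAdjMat : Pmat D * dualAdjMat D = imagAdjMat D * Pmat D := by
  ext y z
  rw [imagAdjMat_eq, Matrix.add_mul, smul_mul, smul_mul, Matrix.add_apply, Matrix.smul_apply,
    Matrix.smul_apply, flipMat_mul_apply, flipMat_mul_apply, dualAdjMat, mul_diagonal, ← sum_sign, mul_sum,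
    sum_filter, sum_filter, smul_sum, smul_sum, ← sum_add_distrib]
  refine sum_congr rfl fun k _ => ?_
  rw [Pmat_flip_left]
  cases y k <;> simp <;> ring_nf <;> simp [Complex.I_sq]

end ChangeOfBasis

section Polynomials

lemma theta_injOn : Set.InjOn (theta D) (range (D + 1)) := by
  intro i _ j _ h
  simpa [theta] using h

lemma aeval_dualAdjMat (q : ℂ[X]) :
    aeval (dualAdjMat D) q = diagonal fun y => q.eval (theta D (wt y)) := by
  rw [dualAdjMat, ← diagonalAlgHom_apply (R := ℂ), aeval_algHom_apply, aeval_pi_apply]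
  rfl

-- `P² A = Aᵉ P²`, and `P³` is a nonzero scalar.
lemma adjMat_mul_Pmat : adjMat D * Pmat D = Pmat D * imagAdjMat D := by
  have h : Pmat D * Pmat D * adjMat D = imagAdjMat D * Pmat D * Pmat D := by
    rw [Matrix.mul_assoc, Pmat_mul_adjMat, ← Matrix.mul_assoc, Pmat_mul_dualAdjMat,
      Matrix.mul_assoc]
  have h3 : (2 - 2 * Complex.I) ^ D • (adjMat D * Pmat D)
      = (2 - 2 * Complex.I) ^ D • (Pmat D * imagAdjMat D) := by
    calc _ = Pmat D * Pmat D * Pmat D * (adjMat D * Pmat D) := by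
          rw [Pmat_cube, smul_mul, Matrix.one_mul]
      _ = Pmat D * (Pmat D * Pmat D * adjMat D) * Pmat D := by simp only [Matrix.mul_assoc]
      _ = Pmat D * imagAdjMat D * (Pmat D * Pmat D * Pmat D) := by
          rw [h]; simp only [Matrix.mul_assoc]
      _ = _ := by rw [Pmat_cube, Matrix.mul_smul, Matrix.mul_one]
  exact smul_right_injective _ two_sub_two_I_pow_ne_zero h3

lemma aeval_dualAdjMat_nodal :
    aeval (dualAdjMat D) (Lagrange.nodal (range (D + 1)) (theta D)) = 0 := by
  rw [aeval_dualAdjMat, ← diagonal_zero]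
  congr 1
  ext y
  exact Lagrange.eval_nodal_at_node (mem_range.mpr (Nat.lt_succ_of_le (wt_le y)))

lemma aeval_eq_zero_of_mul_Pmat {a b : Matrix (Vtx D) (Vtx D) ℂ} (h : a * Pmat D = Pmat D * b)
    {q : ℂ[X]} (ha : aeval a q = 0) : aeval b q = 0 := by
  have := aeval_mul_eq_mul_aeval h q
  rwa [ha, zero_mul, eq_comm, isUnit_Pmat.mul_right_eq_zero] at this

lemma aeval_adjMat_nodal : aeval (adjMat D) (Lagrange.nodal (range (D + 1)) (theta D)) = 0 :=
  aeval_eq_zero_of_mul_Pmat Pmat_mul_adjMat.symm aeval_dualAdjMat_nodal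

lemma aeval_imagAdjMat_nodal :
    aeval (imagAdjMat D) (Lagrange.nodal (range (D + 1)) (theta D)) = 0 :=
  aeval_eq_zero_of_mul_Pmat adjMat_mul_Pmat aeval_adjMat_nodal

lemma Emat_eq_aeval (i : ℕ) :
    Emat D i = aeval (adjMat D) (Lagrange.basis (range (D + 1)) (theta D) i) := rfl

lemma EstarMat_eq_aeval (i : ℕ) :
    EstarMat D i = aeval (dualAdjMat D) (Lagrange.basis (range (D + 1)) (theta D) i) := by
  rw [aeval_dualAdjMat, EstarMat]
  congr 1
  ext y
  have hy : wt y ∈ range (D + 1) := mem_range.mpr (Nat.lt_succ_of_le (wt_le y))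
  split_ifs with h
  · rw [h, Lagrange.eval_basis_self theta_injOn (h ▸ hy)]
  · rw [Lagrange.eval_basis_of_ne (Ne.symm h) hy]

lemma EepsMat_eq_aeval (i : ℕ) :
    EepsMat D i = aeval (imagAdjMat D) (Lagrange.basis (range (D + 1)) (theta D) i) := by
  rw [EepsMat, Emat_eq_aeval, Matrix.mul_assoc, aeval_mul_eq_mul_aeval adjMat_mul_Pmat,
    ← Matrix.mul_assoc, nonsing_inv_mul _ ((isUnit_iff_isUnit_det _).mp isUnit_Pmat),
    Matrix.one_mul]

end Polynomials

section TModule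

variable {W : Submodule ℂ (Vtx D → ℂ)}

lemma flipMat_mem_invtSubalgebra (hW : IsTMod D W) (b : Bool) :
    flipMat D b ∈ invtSubalgebra W := by
  have hA : adjMat D ∈ invtSubalgebra W := hW.1
  have hA' : dualAdjMat D ∈ invtSubalgebra W := hW.2
  have hC := sub_mem (mul_mem hA hA') (mul_mem hA' hA)
  have hR : flipMat D true = (2 : ℂ)⁻¹ • (adjMat D
      + (2 : ℂ)⁻¹ • (adjMat D * dualAdjMat D - dualAdjMat D * adjMat D)) := by
    rw [adjMat_mul_dualAdjMat_sub, ← flipMat_true_add_false]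
    module
  have hL : flipMat D false = (2 : ℂ)⁻¹ • (adjMat D
      - (2 : ℂ)⁻¹ • (adjMat D * dualAdjMat D - dualAdjMat D * adjMat D)) := by
    rw [adjMat_mul_dualAdjMat_sub, ← flipMat_true_add_false]
    module
  cases b
  · rw [hL]; exact Subalgebra.smul_mem _ (sub_mem hA (Subalgebra.smul_mem _ hC _)) _
  · rw [hR]; exact Subalgebra.smul_mem _ (add_mem hA (Subalgebra.smul_mem _ hC _)) _

lemma imagAdjMat_mem_invtSubalgebra (hW : IsTMod D W) : imagAdjMat D ∈ invtSubalgebra W := by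
  rw [imagAdjMat_eq]
  exact add_mem (Subalgebra.smul_mem _ (flipMat_mem_invtSubalgebra hW true) _)
    (Subalgebra.smul_mem _ (flipMat_mem_invtSubalgebra hW false) _)

lemma mem_and_mulVec_eq_of_mem_map_aeval {M : Matrix (Vtx D) (Vtx D) ℂ}
    (hM : M ∈ invtSubalgebra W)
    (hnodal : aeval M (Lagrange.nodal (range (D + 1)) (theta D)) = 0) {r : ℕ} (hr : r ≤ D)
    {u : Vtx D → ℂ}
    (hu : u ∈ Submodule.map (aeval M (Lagrange.basis (range (D + 1)) (theta D) r)).mulVecLin W) :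
    u ∈ W ∧ M *ᵥ u = theta D r • u := by
  obtain ⟨w, hw, rfl⟩ := hu
  refine ⟨aeval_mem_invtSubalgebra hM _ w hw, ?_⟩
  rw [mulVecLin_apply, mulVec_mulVec,
    Lagrange.mul_aeval_basis_of_aeval_nodal_eq_zero (mem_range.mpr (Nat.lt_succ_of_le hr)) hnodal,
    smul_mulVec]

end TModule

section Weights

/-- `x ∈ E*_j V`. -/
def WtHomogeneous (j : ℕ) (x : Vtx D → ℂ) : Prop := ∀ y, wt y ≠ j → x y = 0

lemma wtHomogeneous_EstarMat_mulVec (j : ℕ) (x : Vtx D → ℂ) :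
    WtHomogeneous j (EstarMat D j *ᵥ x) := fun y hy => by
  simp [EstarMat, mulVec_diagonal, hy]

variable {i j : ℕ} {x x' : Vtx D → ℂ}

namespace WtHomogeneous

lemma EstarMat_mulVec (h : WtHomogeneous j x) : EstarMat D j *ᵥ x = x := by
  ext y
  by_cases hy : wt y = j <;> simp [EstarMat, mulVec_diagonal, hy, h y]

lemma dualAdjMat_mulVec (h : WtHomogeneous j x) : dualAdjMat D *ᵥ x = theta D j • x := by
  ext y
  by_cases hy : wt y = j
  · simp [dualAdjMat, mulVec_diagonal, theta, hy]
  · simp [dualAdjMat, mulVec_diagonal, h y hy]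

lemma raise (h : WtHomogeneous j x) : WtHomogeneous (j + 1) (flipMat D true *ᵥ x) :=
  fun y hy => by
    rw [flipMat_mulVec_apply]
    refine sum_eq_zero fun k hk => h _ fun hk' => hy ?_
    rw [← hk', wt_flip_of_true (by simpa using hk)]

lemma lower_apply_eq_zero (h : WtHomogeneous j x) {y : Vtx D} (hy : wt y + 1 ≠ j) :
    (flipMat D false *ᵥ x) y = 0 := by
  rw [flipMat_mulVec_apply]
  refine sum_eq_zero fun k hk => h _ fun hk' => hy ?_
  rw [← hk', wt_flip_of_false (by simpa using hk)]

lemma lower (h : WtHomogeneous (j + 1) x) : WtHomogeneous j (flipMat D false *ᵥ x) :=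
  fun _ hy => h.lower_apply_eq_zero (by omega)

lemma lower_eq_zero (h : WtHomogeneous 0 x) : flipMat D false *ᵥ x = 0 :=
  funext fun _ => h.lower_apply_eq_zero (by omega)

lemma eq_zero_of_lt (h : WtHomogeneous j x) (hj : D < j) : x = 0 :=
  funext fun y => h y (by have := wt_le y; omega)

lemma inp_eq_zero (hx : WtHomogeneous i x) (hx' : WtHomogeneous j x') (hij : i ≠ j) :
    inp x x' = 0 :=
  sum_eq_zero fun y _ => by
    by_cases hy : wt y = i
    · simp [hx' y (hy ▸ hij)]
    · simp [hx y hy]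

end WtHomogeneous

end Weights

section InnerProduct

variable (u v w : Vtx D → ℂ)

lemma inp_eq_dotProduct : inp u v = u ⬝ᵥ star v := rfl

lemma inp_smul_left (c : ℂ) : inp (c • u) v = c * inp u v := by
  simp [inp_eq_dotProduct]

lemma inp_smul_right (c : ℂ) : inp u (c • v) = starRingEnd ℂ c * inp u v := by
  simp [inp_eq_dotProduct, star_smul, dotProduct_smul]

lemma inp_add_right : inp u (v + w) = inp u v + inp u w := by
  simp [inp_eq_dotProduct, dotProduct_add]

lemma inp_sum_left {ι : Type*} (s : Finset ι) (f : ι → Vtx D → ℂ) :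
    inp (∑ i ∈ s, f i) v = ∑ i ∈ s, inp (f i) v := by
  simp [inp_eq_dotProduct, sum_dotProduct]

lemma inp_sum_right {ι : Type*} (s : Finset ι) (f : ι → Vtx D → ℂ) :
    inp v (∑ i ∈ s, f i) = ∑ i ∈ s, inp v (f i) := by
  simp [inp_eq_dotProduct, star_sum, dotProduct_sum]

lemma conj_inp : starRingEnd ℂ (inp u v) = inp v u := by
  simp [inp_eq_dotProduct, dotProduct, mul_comm]

open scoped ComplexOrder in
lemma inp_self_eq_zero {u : Vtx D → ℂ} : inp u u = 0 ↔ u = 0 :=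
  dotProduct_self_star_eq_zero

lemma inp_mulVec_left (M : Matrix (Vtx D) (Vtx D) ℂ) : inp (M *ᵥ u) v = inp u (Mᴴ *ᵥ v) := by
  rw [inp_eq_dotProduct, inp_eq_dotProduct, star_mulVec, conjTranspose_conjTranspose,
    dotProduct_comm, dotProduct_mulVec, dotProduct_comm]

lemma inp_eq_sum_of_mem_span {ι : Type*} [Fintype ι] {b : ι → Vtx D → ℂ}
    (horth : Pairwise fun i j => inp (b i) (b j) = 0) (hb : ∀ i, b i ≠ 0) {x : Vtx D → ℂ}
    (hx : x ∈ Submodule.span ℂ (Set.range b)) (y : Vtx D → ℂ) :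
    inp y x = ∑ i, inp y (b i) * starRingEnd ℂ (inp x (b i)) / inp (b i) (b i) := by
  obtain ⟨c, rfl⟩ := (Submodule.mem_span_range_iff_exists_fun ℂ).mp hx
  have hc : ∀ i, inp (∑ j, c j • b j) (b i) = c i * inp (b i) (b i) := fun i => by
    rw [inp_sum_left, sum_eq_single i (fun j _ hji => by rw [inp_smul_left, horth hji, mul_zero])
      (by simp), inp_smul_left]
  rw [inp_sum_right]
  refine sum_congr rfl fun i _ => ?_
  rw [inp_smul_right, hc, map_mul, conj_inp]
  field_simp [inp_self_eq_zero.not.mpr (hb i)]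

end InnerProduct

section Ladder

def ladder (v : Vtx D → ℂ) (k : ℕ) : Vtx D → ℂ := (flipMat D true ^ k) *ᵥ v

@[simp] lemma ladder_zero (v : Vtx D → ℂ) : ladder v 0 = v := by simp [ladder]

lemma ladder_succ (v : Vtx D → ℂ) (k : ℕ) : ladder v (k + 1) = flipMat D true *ᵥ ladder v k := by
  rw [ladder, ladder, pow_succ', ← mulVec_mulVec]

lemma ladder_mem {W : Submodule ℂ (Vtx D → ℂ)} (hW : IsTMod D W) {v : Vtx D → ℂ} (hv : v ∈ W)
    (k : ℕ) : ladder v k ∈ W :=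
  pow_mem (flipMat_mem_invtSubalgebra hW true) k v hv

lemma WtHomogeneous.ladder {r : ℕ} {v : Vtx D → ℂ} (h : WtHomogeneous r v) (k : ℕ) :
    WtHomogeneous (r + k) (ladder v k) := by
  induction k with
  | zero => simpa
  | succ k ih => rw [ladder_succ]; exact ih.raise

structure IsLowestWtVector (r : ℕ) (v : Vtx D → ℂ) : Prop where
  wtHomogeneous : WtHomogeneous r v
  lower_eq_zero : flipMat D false *ᵥ v = 0
  ne_zero : v ≠ 0

lemma isLowestWtVector_of_mem_lowerBounds {W : Submodule ℂ (Vtx D → ℂ)} (hW : IsTMod D W) {r : ℕ}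
    (hr : r ∈ lowerBounds {i | Submodule.map (EstarMat D i).mulVecLin W ≠ ⊥})
    {v : Vtx D → ℂ} (hv : v ∈ Submodule.map (EstarMat D r).mulVecLin W) (hv0 : v ≠ 0) :
    IsLowestWtVector r v ∧ v ∈ W := by
  obtain ⟨w, hw, rfl⟩ := hv
  have hvW : EstarMat D r *ᵥ w ∈ W := by
    rw [EstarMat_eq_aeval]; exact aeval_mem_invtSubalgebra hW.2 _ w hw
  refine ⟨⟨wtHomogeneous_EstarMat_mulVec r w, ?_, hv0⟩, hvW⟩
  obtain _ | s := r
  · exact (wtHomogeneous_EstarMat_mulVec 0 w).lower_eq_zero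
  · by_contra hL
    have hLs : WtHomogeneous s (flipMat D false *ᵥ EstarMat D (s + 1) *ᵥ w) :=
      (wtHomogeneous_EstarMat_mulVec _ w).lower
    have hne : Submodule.map (EstarMat D s).mulVecLin W ≠ ⊥ :=
      (Submodule.ne_bot_iff _).mpr ⟨_, ⟨_, flipMat_mem_invtSubalgebra hW false _ hvW,
        hLs.EstarMat_mulVec⟩, hL⟩
    exact absurd (hr hne) (by omega)

namespace IsLowestWtVector

variable {r : ℕ} {v : Vtx D → ℂ}

lemma lower_ladder_succ (hv : IsLowestWtVector r v) (k : ℕ) :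
    flipMat D false *ᵥ ladder v (k + 1) = ((k + 1) * (theta D r - k)) • ladder v k :=
  lower_mulVec_pow_succ_mulVec flipMat_false_mul_true_sub
    (fun k => by
      rw [← ladder, (hv.wtHomogeneous.ladder k).dualAdjMat_mulVec, theta, theta]
      push_cast
      ring_nf)
    hv.lower_eq_zero k

lemma inp_ladder_succ (hv : IsLowestWtVector r v) (k : ℕ) :
    inp (ladder v (k + 1)) (ladder v (k + 1))
      = ((k + 1) * (theta D r - k)) * inp (ladder v k) (ladder v k) := by
  nth_rewrite 1 [ladder_succ v k]
  rw [inp_mulVec_left, conjTranspose_flipMat, Bool.not_true, hv.lower_ladder_succ, inp_smul_right]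
  simp [theta, map_ofNat]

-- Otherwise no factor `(k + 1)(D - 2r - k)` vanishes, so no `v_k` does, yet `v_{D+1}` has a
-- weight above `D`.
lemma two_mul_le (hv : IsLowestWtVector r v) : 2 * r ≤ D := by
  by_contra h
  have hne : ∀ k, inp (ladder v k) (ladder v k) ≠ 0 := by
    intro k
    induction k with
    | zero => simpa [inp_self_eq_zero] using hv.ne_zero
    | succ k ih =>
      rw [hv.inp_ladder_succ]
      refine mul_ne_zero (mul_ne_zero (by exact_mod_cast k.succ_ne_zero) fun h0 => ?_) ih
      have : ((2 * r + k : ℕ) : ℂ) = D := by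
        push_cast; simp only [theta] at h0; linear_combination -h0
      have := Nat.cast_injective this
      omega
  refine hne (D + 1) ?_
  rw [(hv.wtHomogeneous.ladder (D + 1)).eq_zero_of_lt (by omega)]
  simp [inp]

lemma theta_eq (hv : IsLowestWtVector r v) : theta D r = ((D - 2 * r : ℕ) : ℂ) := by
  rw [theta, Nat.cast_sub hv.two_mul_le]
  push_cast
  ring

lemma lower_mulVec_ladder (hv : IsLowestWtVector r v) (k : ℕ) :
    flipMat D false *ᵥ ladder v k
      = (k * (((D - 2 * r : ℕ) : ℂ) - k + 1)) • ladder v (k - 1) := by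
  cases k with
  | zero => simp [hv.lower_eq_zero]
  | succ k =>
    rw [hv.lower_ladder_succ, hv.theta_eq, Nat.add_sub_cancel]
    push_cast
    ring_nf

lemma inp_ladder_self (hv : IsLowestWtVector r v) (k : ℕ) :
    inp (ladder v k) (ladder v k) = (k ! * (D - 2 * r).descFactorial k : ℕ) * inp v v := by
  induction k with
  | zero => simp
  | succ k ih =>
    rw [hv.inp_ladder_succ, ih, hv.theta_eq]
    simp only [Nat.cast_mul, Nat.cast_descFactorial_succ, Nat.factorial_succ]
    push_cast
    ring

lemma ladder_ne_zero (hv : IsLowestWtVector r v) {k : ℕ} (hk : k ≤ D - 2 * r) :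
    ladder v k ≠ 0 := by
  rw [Ne, ← inp_self_eq_zero, hv.inp_ladder_self]
  refine mul_ne_zero (Nat.cast_ne_zero.mpr (mul_ne_zero k.factorial_ne_zero ?_))
    (inp_self_eq_zero.not.mpr hv.ne_zero)
  exact (Nat.descFactorial_eq_zero_iff_lt.not.mpr (by omega))

lemma ladder_eq_zero (hv : IsLowestWtVector r v) {k : ℕ} (hk : D - 2 * r < k) :
    ladder v k = 0 :=
  inp_self_eq_zero.mp (by rw [hv.inp_ladder_self, Nat.descFactorial_eq_zero_iff_lt.mpr hk]; simp)

lemma inp_ladder_eq_zero (hv : IsLowestWtVector r v) {i j : ℕ} (hij : i ≠ j) :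
    inp (ladder v i) (ladder v j) = 0 :=
  (hv.wtHomogeneous.ladder i).inp_eq_zero (hv.wtHomogeneous.ladder j) (by omega)

lemma span_ladder_eq (hv : IsLowestWtVector r v) {W : Submodule ℂ (Vtx D → ℂ)}
    (hW : IsIrredTMod D W) (hvW : v ∈ W) :
    Submodule.span ℂ (Set.range fun k : Fin (D - 2 * r + 1) => ladder v k) = W := by
  set U := Submodule.span ℂ (Set.range fun k : Fin (D - 2 * r + 1) => ladder v k)
  have hmem : ∀ k, ladder v k ∈ U := fun k => by
    by_cases hk : k ≤ D - 2 * r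
    · exact Submodule.subset_span ⟨⟨k, by omega⟩, rfl⟩
    · rw [hv.ladder_eq_zero (by omega)]; exact U.zero_mem
  have hgen : ∀ M, (∀ k, M *ᵥ ladder v k ∈ U) → M ∈ invtSubalgebra U := fun M h =>
    mem_invtSubalgebra_span (by rintro _ ⟨k, rfl⟩; exact h k)
  have hR : flipMat D true ∈ invtSubalgebra U := hgen _ fun k => by
    rw [← ladder_succ]; exact hmem _
  have hL : flipMat D false ∈ invtSubalgebra U := hgen _ fun k => by
    rw [hv.lower_mulVec_ladder]; exact U.smul_mem _ (hmem _)
  have hT : IsTMod D U := ⟨by rw [← flipMat_true_add_false]; exact add_mem hR hL, hgen _ fun k => by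
    rw [(hv.wtHomogeneous.ladder k).dualAdjMat_mulVec]; exact U.smul_mem _ (hmem k)⟩
  have hUW : U ≤ W := Submodule.span_le.mpr (by rintro _ ⟨k, rfl⟩; exact ladder_mem hW.1 hvW k)
  refine (hW.2.2 U hT hUW).resolve_left fun h => hv.ne_zero ?_
  simpa [h] using hmem 0

lemma inp_ladder_of_mulVec_eq (hv : IsLowestWtVector r v) {a : ℂ} (ha : a * starRingEnd ℂ a = 1)
    {u : Vtx D → ℂ}
    (hu : (a • flipMat D true + starRingEnd ℂ a • flipMat D false) *ᵥ u
      = ((D - 2 * r : ℕ) : ℂ) • u) (k : ℕ) :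
    inp u (ladder v k) = a ^ k * (D - 2 * r).descFactorial k * inp u v := by
  set B := a • flipMat D true + starRingEnd ℂ a • flipMat D false
  -- `B` is self-adjoint and `B v_k = a v_{k+1} + conj a · k (d - k + 1) v_{k-1}`.
  have hB : Bᴴ = B := by
    simp [B, conjTranspose_flipMat, add_comm]
  refine (eq_pow_mul_descFactorial_of_recurrence (D - 2 * r) a (f := fun k => inp u (ladder v k))
    (fun k => ?_) k).trans (by rw [ladder_zero])
  have h : inp (B *ᵥ u) (ladder v k) = inp (((D - 2 * r : ℕ) : ℂ) • u) (ladder v k) := by rw [hu]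
  rw [inp_mulVec_left, hB, inp_smul_left, add_mulVec, smul_mulVec, smul_mulVec, ← ladder_succ,
    hv.lower_mulVec_ladder, smul_smul, inp_add_right, inp_smul_right, inp_smul_right] at h
  simp only [map_mul, Complex.conj_conj, map_add, map_sub, map_natCast, map_one] at h
  linear_combination a * h - inp u (ladder v (k + 1)) * ha

lemma inp_eq_of_inp_ladder (hv : IsLowestWtVector r v) {W : Submodule ℂ (Vtx D → ℂ)}
    (hW : IsIrredTMod D W) (hvW : v ∈ W) {x y : Vtx D → ℂ} (hx : x ∈ W) {a b : ℂ}
    (hxk : ∀ k, inp x (ladder v k) = b ^ k * (D - 2 * r).descFactorial k * inp x v)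
    (hyk : ∀ k, inp y (ladder v k) = a ^ k * (D - 2 * r).descFactorial k * inp y v) :
    inp y x = (1 + a * starRingEnd ℂ b) ^ (D - 2 * r) * inp y v * starRingEnd ℂ (inp x v)
      / inp v v := by
  rw [← hv.span_ladder_eq hW hvW] at hx
  rw [inp_eq_sum_of_mem_span (fun i j hij => hv.inp_ladder_eq_zero (Fin.val_injective.ne hij))
      (fun i => hv.ladder_ne_zero (Nat.lt_succ_iff.mp i.2)) hx y,
    Fin.sum_univ_eq_sum_range (fun k => inp y (ladder v k) * starRingEnd ℂ (inp x (ladder v k))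
      / inp (ladder v k) (ladder v k)),
    add_comm, add_pow, sum_mul, sum_mul, sum_div]
  refine sum_congr rfl fun k hk => ?_
  have hkd : k ≤ D - 2 * r := Nat.lt_succ_iff.mp (mem_range.mp hk)
  have hchoose : ((D - 2 * r).choose k : ℂ) ≠ 0 := Nat.cast_ne_zero.mpr (Nat.choose_pos hkd).ne'
  have hfact : (k ! : ℂ) ≠ 0 := Nat.cast_ne_zero.mpr k.factorial_ne_zero
  have hvv := inp_self_eq_zero.not.mpr hv.ne_zero
  rw [hxk, hyk, hv.inp_ladder_self, Nat.descFactorial_eq_factorial_mul_choose]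
  simp only [Nat.cast_mul, map_mul, map_pow, map_natCast, one_pow, mul_one]
  field_simp
  ring

end IsLowestWtVector

end Ladder

end Hypercube

open Hypercube


theorem norm_u_formula_general (D : ℕ)
    (W : Submodule ℂ (Vtx D → ℂ)) (hW : IsIrredTMod D W) (r : ℕ)
    (hr : IsLeast {i | Submodule.map (EstarMat D i).mulVecLin W ≠ ⊥} r)
    (d : ℕ) (hd : d = D - 2 * r)
    (u : Vtx D → ℂ) (hu : u ∈ Submodule.map (Emat D r).mulVecLin W)
    (ustar : Vtx D → ℂ) (hustar : ustar ∈ Submodule.map (EstarMat D r).mulVecLin W)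
    (hustar0 : ustar ≠ 0)
    (ueps : Vtx D → ℂ) (hueps : ueps ∈ Submodule.map (EepsMat D r).mulVecLin W)
    (hueps0 : ueps ≠ 0) :
    inp ueps ustar ≠ 0 ∧
    inp u u = (1 + Complex.I) ^ d * inp u ustar * inp ueps u * (inp ueps ustar)⁻¹ := by
  subst hd
  obtain ⟨hv, hvW⟩ := isLowestWtVector_of_mem_lowerBounds hW.1 hr.2 hustar hustar0
  have hrD : r ≤ D := by have := hv.two_mul_le; omega
  obtain ⟨huW, hAu⟩ := mem_and_mulVec_eq_of_mem_map_aeval hW.1.1 aeval_adjMat_nodal hrD hu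
  obtain ⟨heW, hAe⟩ := mem_and_mulVec_eq_of_mem_map_aeval (imagAdjMat_mem_invtSubalgebra hW.1)
    aeval_imagAdjMat_nodal hrD (EepsMat_eq_aeval r ▸ hueps)
  rw [← flipMat_true_add_false, hv.theta_eq] at hAu
  rw [imagAdjMat_eq, hv.theta_eq] at hAe
  have hu_k := hv.inp_ladder_of_mulVec_eq (a := 1) (by simp) (by simpa using hAu)
  have he_k := hv.inp_ladder_of_mulVec_eq (a := -Complex.I) (by simp) (by simpa using hAe)
  have h_uu := hv.inp_eq_of_inp_ladder hW hvW huW hu_k hu_k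
  have h_eu := hv.inp_eq_of_inp_ladder hW hvW huW hu_k he_k
  have h_ee := hv.inp_eq_of_inp_ladder hW hvW heW he_k he_k
  have hp : inp ueps ustar ≠ 0 := fun h => hueps0 (inp_self_eq_zero.mp (by simp [h_ee, h]))
  have hvv := inp_self_eq_zero.not.mpr hv.ne_zero
  have h2 : (1 + 1 : ℂ) = (1 + Complex.I) * (1 + -Complex.I) := by
    ring_nf; rw [Complex.I_sq]; ring
  simp only [map_one, mul_one] at h_uu h_eu
  refine ⟨hp, ?_⟩
  rw [h_uu, h_eu, h2, mul_pow]
  field_simp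

/-- For nonzero `u ∈ E_r W`, `u* ∈ E*_r W`, `uᵉ ∈ Eᵉ_r W`:
`⟨uᵉ, u*⟩ ≠ 0` and `‖u‖² = (1+i)^d·⟨u, u*⟩·⟨uᵉ, u⟩·⟨uᵉ, u*⟩⁻¹`. -/
theorem norm_u_formula (D : ℕ) (hD : 0 < D)
    (W : Submodule ℂ (Vtx D → ℂ)) (hW : IsIrredTMod D W) (r : ℕ)
    (hr : IsLeast {i | Submodule.map (EstarMat D i).mulVecLin W ≠ ⊥} r)
    (d : ℕ) (hd : d = D - 2 * r)
    (u : Vtx D → ℂ) (hu : u ∈ Submodule.map (Emat D r).mulVecLin W) (hu0 : u ≠ 0)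
    (ustar : Vtx D → ℂ) (hustar : ustar ∈ Submodule.map (EstarMat D r).mulVecLin W)
    (hustar0 : ustar ≠ 0)
    (ueps : Vtx D → ℂ) (hueps : ueps ∈ Submodule.map (EepsMat D r).mulVecLin W)
    (hueps0 : ueps ≠ 0) :
    inp ueps ustar ≠ 0 ∧
    inp u u = (1 + Complex.I) ^ d * inp u ustar * inp ueps u * (inp ueps ustar)⁻¹ :=
  norm_u_formula_general D W hW r hr d hd u hu ustar hustar hustar0 ueps hueps hueps0
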